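/- Let X = x_1,…,x_m be a search sequence over {1,…,n} with m ≥ 2, and suppose there exists a function σ : {1,…,n} → {1,…,n} such that x_i = σ(x_{i−1}) for all 2 ≤ i ≤ m (i.e., every search is completely determined by the previous one, as for a fixed permutation repeated over and over). Then the conditional entropy satisfies 0 ≤ H_c(f_X) ≤ 2/m. -/

import Mathlib

/-- `f_X(a,b)`: the number of transitions from `a` to `b` in the search sequence
`x_1,…,x_m`, i.e. the number of `i` with `2 ≤ i ≤ m`, `x_{i−1} = a` and `x i = b`. -/
def fpair (x : ℕ → ℕ) (m a b : ℕ) : ℕ :=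
  ((Finset.Icc 2 m).filter fun i => x (i - 1) = a ∧ x i = b).card

/-- `f_X(a)`: the number of searches to `a` in `x_1,…,x_m`. -/
def fcount (x : ℕ → ℕ) (m a : ℕ) : ℕ :=
  ((Finset.Icc 1 m).filter fun i => x i = a).card

/-- The conditional entropy
`H_c(f_X) = ∑_{(a,b) : f_X(a,b) > 0} (f_X(a,b)/m) · log₂(f_X(a) / f_X(a,b))`. -/
noncomputable def condEntropy (x : ℕ → ℕ) (m n : ℕ) : ℝ :=
  ∑ a ∈ Finset.Icc 1 n, ∑ b ∈ Finset.Icc 1 n,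
    if 0 < fpair x m a b then
      (fpair x m a b : ℝ) / m * Real.logb 2 ((fcount x m a : ℝ) / (fpair x m a b : ℝ))
    else 0

lemma fpair_le_fcount (x : ℕ → ℕ) (m a b : ℕ) : fpair x m a b ≤ fcount x m a := by
  apply Finset.card_le_card_of_injOn (fun i => i - 1)
  · intro i hi
    simp only [Finset.mem_coe, Finset.mem_filter, Finset.mem_Icc] at *
    refine ⟨⟨?_, ?_⟩, hi.2.1⟩ <;> omega
  · intro i hi j hj h
    simp only [Finset.mem_coe, Finset.mem_filter, Finset.mem_Icc] at hi hj
    simp only at h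
    omega

lemma fpair_force (x : ℕ → ℕ) (m a b : ℕ) (σ : ℕ → ℕ)
    (hσ : ∀ i, 2 ≤ i → i ≤ m → x i = σ (x (i - 1)))
    (h : 0 < fpair x m a b) : b = σ a := by
  obtain ⟨i, hi⟩ := Finset.card_pos.mp h
  simp only [Finset.mem_filter, Finset.mem_Icc] at hi
  have := hσ i hi.1.1 hi.1.2
  rw [hi.2.2, hi.2.1] at this
  exact this

lemma fcount_le_one (x : ℕ → ℕ) (m a : ℕ) (σ : ℕ → ℕ)
    (hσ : ∀ i, 2 ≤ i → i ≤ m → x i = σ (x (i - 1))) :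
    fcount x m a ≤ fpair x m a (σ a) + 1 := by
  have hcard : fcount x m a ≤
      (((Finset.Icc 2 m).filter fun i => x (i - 1) = a ∧ x i = σ a) ∪ {m + 1}).card := by
    apply Finset.card_le_card_of_injOn (fun i => i + 1)
    · intro i hi
      simp only [Finset.mem_coe, Finset.mem_filter, Finset.mem_Icc, Finset.mem_union,
        Finset.mem_singleton] at *
      rcases eq_or_lt_of_le hi.1.2 with h | h
      · right; omega
      · left
        have hx1 : x (i + 1) = σ (x (i + 1 - 1)) := hσ (i + 1) (by omega) (by omega)
        simp only [Nat.add_sub_cancel] at hx1 ⊢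
        exact ⟨⟨by omega, by omega⟩, hi.2, by rw [hx1, hi.2]⟩
    · intro i _ j _ h
      simpa using h
  calc fcount x m a ≤ _ := hcard
    _ ≤ _ + ({m+1} : Finset ℕ).card := Finset.card_union_le _ _
    _ = fpair x m a (σ a) + 1 := by rw [Finset.card_singleton]; rfl

lemma fcount_eq (x : ℕ → ℕ) (m a : ℕ) (σ : ℕ → ℕ)
    (hσ : ∀ i, 2 ≤ i → i ≤ m → x i = σ (x (i - 1)))
    (hne : x m ≠ a) : fcount x m a ≤ fpair x m a (σ a) := by
  apply Finset.card_le_card_of_injOn (fun i => i + 1)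
  · intro i hi
    simp only [Finset.mem_coe, Finset.mem_filter, Finset.mem_Icc] at *
    have him : i ≠ m := fun h => hne (h ▸ hi.2)
    have hx1 : x (i + 1) = σ (x (i + 1 - 1)) := hσ (i + 1) (by omega) (by omega)
    simp only [Nat.add_sub_cancel] at hx1 ⊢
    exact ⟨⟨by omega, by omega⟩, hi.2, by rw [hx1, hi.2]⟩
  · intro i _ j _ h
    simpa using h

/-- If `x_1,…,x_m` (`m ≥ 2`) is a search sequence over `{1,…,n}` in which
every search is completely determined by the previous one via a function
`σ : {1,…,n} → {1,…,n}` (i.e. `x_i = σ(x_{i−1})` for `2 ≤ i ≤ m`), then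
`0 ≤ H_c(f_X) ≤ 2/m`. -/
theorem stmt14 (n m : ℕ) (hm : 2 ≤ m) (x : ℕ → ℕ)
    (hx : ∀ i ∈ Finset.Icc 1 m, x i ∈ Finset.Icc 1 n)
    (σ : ℕ → ℕ) (hσmem : ∀ a ∈ Finset.Icc 1 n, σ a ∈ Finset.Icc 1 n)
    (hσ : ∀ i, 2 ≤ i → i ≤ m → x i = σ (x (i - 1))) :
    0 ≤ condEntropy x m n ∧ condEntropy x m n ≤ 2 / m := by
  have hm0 : (0:ℝ) < m := by positivity
  have hL : (0:ℝ) < Real.log 2 := Real.log_pos one_lt_two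
  have hL2 : (1/2 : ℝ) ≤ Real.log 2 := by
    have := Real.log_two_gt_d9; linarith
  constructor
  · apply Finset.sum_nonneg; intro a _
    apply Finset.sum_nonneg; intro b _
    split
    · apply mul_nonneg (by positivity)
      apply Real.logb_nonneg one_lt_two
      rw [one_le_div (by exact_mod_cast ‹0 < fpair x m a b›)]
      exact_mod_cast fpair_le_fcount x m a b
    · exact le_rfl
  · have key : ∀ a b, (if 0 < fpair x m a b then
        (fpair x m a b : ℝ) / m * Real.logb 2 ((fcount x m a : ℝ) / (fpair x m a b : ℝ))
        else 0) ≤ (if a = x m ∧ b = σ a then (2:ℝ)/m else 0) := by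
      intro a b
      split
      case isFalse => split <;> positivity
      case isTrue h =>
        have hb : b = σ a := fpair_force x m a b σ hσ h
        set f : ℕ := fpair x m a b with hf
        have hfpos : (0:ℝ) < f := by exact_mod_cast h
        by_cases ha : a = x m
        · rw [if_pos ⟨ha, hb⟩]
          have hup : fcount x m a ≤ f + 1 := by
            rw [hf, hb]; exact fcount_le_one x m a σ hσ
          have hlo : f ≤ fcount x m a := fpair_le_fcount x m a b
          set r : ℝ := (fcount x m a : ℝ) / f with hr
          have hr1 : 1 ≤ r := by
            rw [hr, le_div_iff₀ hfpos]; simpa using (by exact_mod_cast hlo : (f:ℝ) ≤ fcount x m a)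
          have hrlog : Real.log r ≤ 1 / f := by
            have h1 : Real.log r ≤ r - 1 := Real.log_le_sub_one_of_pos (by linarith)
            have h2 : r ≤ ((f:ℝ) + 1) / f := by
              rw [hr]
              gcongr
              exact_mod_cast hup
            have : ((f:ℝ) + 1) / f - 1 = 1 / f := by field_simp; ring
            linarith
          have hlogb : Real.logb 2 r ≤ (1 / f) / Real.log 2 := by
            rw [Real.logb, div_le_div_iff_of_pos_right hL] at *
            exact hrlog
          calc (f:ℝ) / m * Real.logb 2 r ≤ (f:ℝ) / m * ((1 / f) / Real.log 2) := by
                apply mul_le_mul_of_nonneg_left hlogb (by positivity)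
            _ = 1 / (m * Real.log 2) := by field_simp
            _ ≤ 2 / m := by
                rw [div_le_div_iff₀ (by positivity) hm0]
                nlinarith
        · -- a ≠ x m : the term is zero
          have hup : fcount x m a ≤ f := by
            rw [hf, hb]
            exact fcount_eq x m a σ hσ (fun hh => ha hh.symm)
          have hlo : f ≤ fcount x m a := fpair_le_fcount x m a b
          have heq : (fcount x m a : ℝ) / f = 1 := by
            have : fcount x m a = f := le_antisymm hup hlo
            rw [this]; field_simp
          rw [heq, Real.logb_one, mul_zero]
          split <;> positivity
    calc condEntropy x m n ≤ ∑ a ∈ Finset.Icc 1 n, ∑ b ∈ Finset.Icc 1 n,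
          ((if a = x m ∧ b = σ a then (2:ℝ)/m else 0) : ℝ) := by
          apply Finset.sum_le_sum; intro a _
          exact Finset.sum_le_sum fun b _ => key a b
      _ ≤ ∑ a ∈ Finset.Icc 1 n, ((if a = x m then (2:ℝ)/m else 0) : ℝ) := by
          apply Finset.sum_le_sum; intro a _
          by_cases ha : a = x m
          · simp only [ha, true_and, if_pos rfl]
            rw [Finset.sum_ite_eq' (Finset.Icc 1 n) (σ (x m)) (fun _ => (2:ℝ)/m)]
            split
            · exact le_rfl
            · positivity
          · simp [ha]
      _ ≤ 2 / m := by
          rw [Finset.sum_ite_eq' (Finset.Icc 1 n) (x m) (fun _ => (2:ℝ)/m)]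
          split
          · exact le_rfl
          · positivity
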